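/- IPC is complete: every IPC tautology is a theorem of IPC. That is, if an implicational formula Z evaluates to true under every Boolean valuation of its propositional variables, then Z is derivable in the Hilbert system with axiom schemes IPC1, IPC2, Peirce and the rule modus ponens. -/
import Mathlib


/-- Formulas of the Implicational Propositional Calculus: propositional
variables and implication. -/
inductive IPCFormula : Type where
  | var : ℕ → IPCFormula
  | imp : IPCFormula → IPCFormula → IPCFormula

infixr:60 " ⊃' " => IPCFormula.imp

/-- Derivability from a set of hypotheses Γ in the Hilbert system with
axiom schemes IPC1, IPC2, Peirce and the rule modus ponens. -/
inductive IPCDeriv : Set IPCFormula → IPCFormula → Prop where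
  | hyp {Γ : Set IPCFormula} {X : IPCFormula} : X ∈ Γ → IPCDeriv Γ X
  | ipc1 {Γ : Set IPCFormula} (X Y : IPCFormula) :
      IPCDeriv Γ (X ⊃' (Y ⊃' X))
  | ipc2 {Γ : Set IPCFormula} (X Y Z : IPCFormula) :
      IPCDeriv Γ ((X ⊃' (Y ⊃' Z)) ⊃' ((X ⊃' Y) ⊃' (X ⊃' Z)))
  | peirce {Γ : Set IPCFormula} (X Y : IPCFormula) :
      IPCDeriv Γ (((X ⊃' Y) ⊃' X) ⊃' X)
  | mp {Γ : Set IPCFormula} {X Y : IPCFormula} :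
      IPCDeriv Γ (X ⊃' Y) → IPCDeriv Γ X → IPCDeriv Γ Y

/-- A theorem of IPC: derivable from no hypotheses. -/
def IPCThm (X : IPCFormula) : Prop := IPCDeriv ∅ X

/-- Disjunction defined within IPC: X ∨ Y := (X ⊃ Y) ⊃ Y. -/
def IPCFormula.disj (X Y : IPCFormula) : IPCFormula := (X ⊃' Y) ⊃' Y

/-- Evaluation of an IPC formula under a Boolean valuation of the variables,
interpreting ⊃ as material implication. -/
def IPCEval (v : ℕ → Bool) : IPCFormula → Bool
  | IPCFormula.var n => v n
  | IPCFormula.imp X Y => !(IPCEval v X) || IPCEval v Y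

namespace IPCAux
open IPCFormula

lemma weaken {Γ Γ' : Set IPCFormula} {X : IPCFormula} (h : IPCDeriv Γ X) (s : Γ ⊆ Γ') :
    IPCDeriv Γ' X := by
  induction h with
  | hyp hm => exact .hyp (s hm)
  | ipc1 A B => exact .ipc1 A B
  | ipc2 A B C => exact .ipc2 A B C
  | peirce A B => exact .peirce A B
  | mp _ _ ih1 ih2 => exact .mp ih1 ih2

lemma impId {Γ : Set IPCFormula} (X : IPCFormula) : IPCDeriv Γ (X ⊃' X) :=
  .mp (.mp (.ipc2 X (X ⊃' X) X) (.ipc1 X (X ⊃' X))) (.ipc1 X X)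

lemma ded {Γ : Set IPCFormula} {X Y : IPCFormula} (h : IPCDeriv (insert X Γ) Y) :
    IPCDeriv Γ (X ⊃' Y) := by
  generalize hD : insert X Γ = D at h
  induction h generalizing Γ with
  | hyp hm =>
    subst hD
    rcases hm with rfl | hm
    · exact impId _
    · exact .mp (.ipc1 _ _) (.hyp hm)
  | ipc1 A B => exact .mp (.ipc1 _ _) (.ipc1 A B)
  | ipc2 A B C => exact .mp (.ipc1 _ _) (.ipc2 A B C)
  | peirce A B => exact .mp (.ipc1 _ _) (.peirce A B)
  | mp _ _ ih1 ih2 => exact .mp (.mp (.ipc2 _ _ _) (ih1 hD)) (ih2 hD)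

lemma hypIns {Γ : Set IPCFormula} (X : IPCFormula) : IPCDeriv (insert X Γ) X :=
  .hyp (Set.mem_insert _ _)

lemma weakenIns {Γ : Set IPCFormula} {X : IPCFormula} (A : IPCFormula)
    (h : IPCDeriv Γ X) : IPCDeriv (insert A Γ) X :=
  weaken h (Set.subset_insert _ _)

/-- variables occurring in a formula -/
def vars : IPCFormula → List ℕ
  | .var n => [n]
  | .imp A B => vars A ++ vars B

/-- the hypothesis recording the value of variable n under v, with target Z -/
def hypOf (Z : IPCFormula) (v : ℕ → Bool) (n : ℕ) : IPCFormula :=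
  if v n then .var n else .var n ⊃' Z

def Γset (Z : IPCFormula) (v : ℕ → Bool) (L : List ℕ) : Set IPCFormula :=
  {F | ∃ n ∈ L, F = hypOf Z v n}

lemma kalmar (Z : IPCFormula) (v : ℕ → Bool) (L : List ℕ) (X : IPCFormula)
    (hX : ∀ n ∈ vars X, n ∈ L) :
    (IPCEval v X = true → IPCDeriv (Γset Z v L) ((X ⊃' Z) ⊃' Z)) ∧
    (IPCEval v X = false → IPCDeriv (Γset Z v L) (X ⊃' Z)) := by
  induction X with
  | var n =>
    constructor
    · intro hv
      apply ded
      exact .mp (hypIns _) (weakenIns _ (.hyp ⟨n, hX n (by simp [vars]), by simp only [IPCEval] at hv; simp [hypOf, hv]⟩))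
    · intro hv
      exact .hyp ⟨n, hX n (by simp [vars]), by simp only [IPCEval] at hv; simp [hypOf, hv]⟩
  | imp A B ihA ihB =>
    have hA : ∀ n ∈ vars A, n ∈ L := fun n hn => hX n (by simp [vars, hn])
    have hB : ∀ n ∈ vars B, n ∈ L := fun n hn => hX n (by simp [vars, hn])
    constructor
    · intro hv
      simp only [IPCEval, Bool.or_eq_true, Bool.not_eq_true'] at hv
      rcases hv with hv | hv
      · -- A false: have A ⊃ Z, need ((A⊃B)⊃Z)⊃Z
        have hAZ : IPCDeriv (Γset Z v L) (A ⊃' Z) := (ihA hA).2 hv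
        apply ded
        -- context: insert ((A⊃B)⊃Z) Γ ⊢ Z, via Peirce on (Z ⊃' B)
        apply IPCDeriv.mp (.peirce Z B)
        apply ded
        -- insert (Z⊃B) (insert ((A⊃B)⊃Z) Γ) ⊢ Z
        apply IPCDeriv.mp (weakenIns _ (hypIns ((A ⊃' B) ⊃' Z)))
        -- ⊢ A ⊃ B
        apply ded
        apply IPCDeriv.mp (weakenIns _ (hypIns (Z ⊃' B)))
        exact .mp (weakenIns _ (weakenIns _ (weakenIns _ hAZ))) (hypIns A)
      · -- B true: have (B⊃Z)⊃Z, need ((A⊃B)⊃Z)⊃Z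
        have hBZ : IPCDeriv (Γset Z v L) ((B ⊃' Z) ⊃' Z) := (ihB hB).1 hv
        apply ded
        apply IPCDeriv.mp (weakenIns _ hBZ)
        -- ⊢ B ⊃ Z
        apply ded
        apply IPCDeriv.mp (weakenIns _ (hypIns ((A ⊃' B) ⊃' Z)))
        -- ⊢ A ⊃ B
        exact .mp (.ipc1 B A) (hypIns B)
    · intro hv
      simp only [IPCEval, Bool.or_eq_false_iff, Bool.not_eq_false'] at hv
      have hAt : IPCDeriv (Γset Z v L) ((A ⊃' Z) ⊃' Z) := (ihA hA).1 hv.1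
      have hBf : IPCDeriv (Γset Z v L) (B ⊃' Z) := (ihB hB).2 hv.2
      apply ded
      apply IPCDeriv.mp (weakenIns _ hAt)
      apply ded
      apply IPCDeriv.mp (weakenIns _ (weakenIns _ hBf))
      exact .mp (weakenIns _ (hypIns (A ⊃' B))) (hypIns A)

lemma gamma_cons (Z : IPCFormula) (v : ℕ → Bool) (n : ℕ) (L : List ℕ) (hn : n ∉ L)
    (b : Bool) :
    Γset Z (Function.update v n b) (n :: L)
      = insert (hypOf Z (Function.update v n b) n) (Γset Z v L) := by
  ext F
  simp only [Γset, Set.mem_setOf_eq, List.mem_cons, Set.mem_insert_iff]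
  constructor
  · rintro ⟨m, hm | hm, rfl⟩
    · subst hm; exact Or.inl rfl
    · refine Or.inr ⟨m, hm, ?_⟩
      have : m ≠ n := fun e => hn (e ▸ hm)
      simp [hypOf, Function.update_of_ne this]
  · rintro (rfl | ⟨m, hm, rfl⟩)
    · exact ⟨n, Or.inl rfl, rfl⟩
    · refine ⟨m, Or.inr hm, ?_⟩
      have : m ≠ n := fun e => hn (e ▸ hm)
      simp [hypOf, Function.update_of_ne this]

lemma strip (Z : IPCFormula) (L : List ℕ) (hnd : L.Nodup)
    (h : ∀ v : ℕ → Bool, IPCDeriv (Γset Z v L) Z) : IPCThm Z := by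
  induction L with
  | nil =>
    have := h (fun _ => false)
    have e : Γset Z (fun _ => false) [] = (∅ : Set IPCFormula) := by
      ext F; simp [Γset]
    rwa [e] at this
  | cons n L ih =>
    have hn : n ∉ L := (List.nodup_cons.mp hnd).1
    apply ih (List.nodup_cons.mp hnd).2
    intro v
    have h1 := h (Function.update v n true)
    have h2 := h (Function.update v n false)
    rw [gamma_cons Z v n L hn true] at h1
    rw [gamma_cons Z v n L hn false] at h2
    simp only [hypOf, Function.update_self, if_true] at h1 h2
    exact .mp (ded h2) (ded h1)

end IPCAux

theorem stmt_19 (Z : IPCFormula) (h : ∀ v : ℕ → Bool, IPCEval v Z = true) :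
    IPCThm Z := by
  apply IPCAux.strip Z (IPCAux.vars Z).dedup (List.nodup_dedup _)
  intro v
  have hk := (IPCAux.kalmar Z v (IPCAux.vars Z).dedup Z
    (fun n hn => List.mem_dedup.mpr hn)).1 (h v)
  exact .mp hk (IPCAux.impId Z)
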